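/- Let f : ℝ^d → ℝ^d satisfy the linear growth bound |f(x)| ≤ m + L|x| and strong monotonicity ⟨f(x) - f(y), x - y⟩ ≥ μ|x - y|². Fix γ ∈ (0, μ/(2L²)). Then for every x ∈ ℝ^d one has |x - γ f(x)|² ≤ max{1 - γμ + 2L²γ², 0} · |x|² + cγ for a constant c depending only on m, L, μ. -/
import Mathlib


open scoped RealInnerProductSpace

/-- One-step drift contraction estimate for the ULA scheme: under linear growth and strong
monotonicity of `f`, for every stepsize `γ ∈ (0, μ/(2L²))` one has
`|x - γ f(x)|² ≤ max{1 - γμ + 2L²γ², 0} |x|² + cγ` with `c` depending only on `m, L, μ`. -/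
theorem stmt2 (d : ℕ) (f : EuclideanSpace ℝ (Fin d) → EuclideanSpace ℝ (Fin d))
    (m L μ : ℝ) (hm : 0 < m) (hL : 0 < L) (hμ : 0 < μ)
    (hgrowth : ∀ x, ‖f x‖ ≤ m + L * ‖x‖)
    (hmono : ∀ x y, ⟪f x - f y, x - y⟫ ≥ μ * ‖x - y‖ ^ 2) :
    ∃ c > 0, ∀ γ : ℝ, 0 < γ → γ < μ / (2 * L ^ 2) → ∀ x,
      ‖x - γ • f x‖ ^ 2 ≤ max (1 - γ * μ + 2 * L ^ 2 * γ ^ 2) 0 * ‖x‖ ^ 2 + c * γ := by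
  refine ⟨m ^ 2 / μ + m ^ 2 * μ / L ^ 2, by positivity, ?_⟩
  intro γ hγ hγ2 x
  have ha0 : (0:ℝ) ≤ ‖x‖ := norm_nonneg x
  have hb0 : (0:ℝ) ≤ ‖f x‖ := norm_nonneg _
  have hgr := hgrowth x
  have hf0 : ‖f 0‖ ≤ m := by simpa using hgrowth 0
  have hti : ⟪x, f x⟫ ≥ μ * ‖x‖ ^ 2 - m * ‖x‖ := by
    have h1 : ⟪f x, x⟫ - ⟪f 0, x⟫ ≥ μ * ‖x‖ ^ 2 := by
      have := hmono x 0
      simpa [inner_sub_left] using this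
    have h2 : |⟪f 0, x⟫| ≤ m * ‖x‖ := by
      calc |⟪f 0, x⟫| ≤ ‖f 0‖ * ‖x‖ := abs_real_inner_le_norm _ _
        _ ≤ m * ‖x‖ := by gcongr
    rw [real_inner_comm]
    have h3 := (abs_le.mp h2).1
    linarith
  have hexp : ‖x - γ • f x‖ ^ 2 = ‖x‖ ^ 2 - 2 * γ * ⟪x, f x⟫ + γ ^ 2 * ‖f x‖ ^ 2 := by
    rw [norm_sub_sq_real, real_inner_smul_right, norm_smul, Real.norm_eq_abs,
      abs_of_pos hγ, mul_pow]
    ring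
  have hγle : γ ≤ μ / (2 * L ^ 2) := le_of_lt hγ2
  have hγμ : 2 * L ^ 2 * γ ≤ μ := by
    have h2L : (0:ℝ) < 2 * L ^ 2 := by positivity
    calc 2 * L ^ 2 * γ ≤ 2 * L ^ 2 * (μ / (2 * L ^ 2)) := by gcongr
      _ = μ := by field_simp
  have hb2 : ‖f x‖ ^ 2 ≤ 2 * m ^ 2 + 2 * L ^ 2 * ‖x‖ ^ 2 := by
    nlinarith [sq_nonneg (m - L * ‖x‖)]
  have h2ma : 2 * m * ‖x‖ ≤ μ * ‖x‖ ^ 2 + m ^ 2 / μ := by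
    have hk : m ^ 2 / μ * μ = m ^ 2 := div_mul_cancel₀ _ hμ.ne'
    nlinarith [sq_nonneg (μ * ‖x‖ - m), hμ]
  have hγm : 2 * γ ^ 2 * m ^ 2 ≤ (m ^ 2 * μ / L ^ 2) * γ := by
    have : 2 * γ * m ^ 2 ≤ m ^ 2 * μ / L ^ 2 := by
      rw [le_div_iff₀ (by positivity : (0:ℝ) < L ^ 2)]
      nlinarith
    nlinarith
  have hstep : ‖x‖ ^ 2 - 2 * γ * ⟪x, f x⟫ + γ ^ 2 * ‖f x‖ ^ 2
      ≤ (1 - γ * μ + 2 * L ^ 2 * γ ^ 2) * ‖x‖ ^ 2 + (m ^ 2 / μ + m ^ 2 * μ / L ^ 2) * γ := by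
    have hA : 2 * γ * (μ * ‖x‖ ^ 2 - m * ‖x‖) ≤ 2 * γ * ⟪x, f x⟫ :=
      mul_le_mul_of_nonneg_left hti (by positivity)
    have hB : γ ^ 2 * ‖f x‖ ^ 2 ≤ γ ^ 2 * (2 * m ^ 2 + 2 * L ^ 2 * ‖x‖ ^ 2) :=
      mul_le_mul_of_nonneg_left hb2 (sq_nonneg γ)
    have hC : γ * (2 * m * ‖x‖) ≤ γ * (μ * ‖x‖ ^ 2 + m ^ 2 / μ) :=
      mul_le_mul_of_nonneg_left h2ma hγ.le
    nlinarith [hA, hB, hC, hγm]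
  have hmax : (1 - γ * μ + 2 * L ^ 2 * γ ^ 2) * ‖x‖ ^ 2
      ≤ max (1 - γ * μ + 2 * L ^ 2 * γ ^ 2) 0 * ‖x‖ ^ 2 :=
    mul_le_mul_of_nonneg_right (le_max_left _ _) (sq_nonneg _)
  rw [hexp]
  linarith
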